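/- arXiv:1501.05104 — 7 statements merged into one kernel-verified Lean document; each statement's English description precedes it below -/
import Mathlib

section
/- If a stack operation f (a flow τ(x) ⊣ σ(x) built from unary function symbols applied to a single variable) is a cycle, then fⁿ ≠ 0 for all n ≥ 1. -/
/-!  Base definitions for the Stack semiring: unary flows ("stack operations")
`τ(x) ⊣ σ(x)` are modelled as pairs of lists of unary function symbols
(outermost symbol first).  The resolution product of two stack operations is
defined when one of the two sequences to be unified is a prefix of the other. -/

/-- A stack operation `τ(x) ⊣ σ(x)`: the first component is the head/left term
`τ(x)`, the second the body/right term `σ(x)`, each a sequence of unary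
function symbols applied to the variable `x` (outermost first). -/
abbrev SOp := List ℕ × List ℕ

/-- Resolution product of stack operations (`none` = undefined = 0).
`(τ ⊣ σ)(ρ ⊣ χ)` unifies `σ(x)` with `ρ(y)`. -/
def scomp (f g : SOp) : Option SOp :=
  if f.2 <+: g.1 then some (f.1 ++ g.1.drop f.2.length, g.2)
  else if g.1 <+: f.2 then some (f.1, g.2 ++ f.2.drop g.1.length)
  else none

/-- Height of a stack operation: max of the heights of its two terms. -/
def hOp (f : SOp) : ℕ := max f.1.length f.2.length

/-- A stack operation is a cycle iff its two terms are matchable, which for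
unary terms `τ(x)`, `σ(y)` means one sequence is a prefix of the other. -/
def isCycleS (f : SOp) : Prop := f.1 <+: f.2 ∨ f.2 <+: f.1

/-- `f` is increasing when `h(τ(x)) ≥ h(σ(x))`. -/
def incP (f : SOp) : Prop := f.2.length ≤ f.1.length

/-- `f` is decreasing when `h(τ(x)) ≤ h(σ(x))`. -/
def decP (f : SOp) : Prop := f.1.length ≤ f.2.length

instance : DecidablePred incP := fun f => inferInstanceAs (Decidable (_ ≤ _))
instance : DecidablePred decP := fun f => inferInstanceAs (Decidable (_ ≤ _))

/-- A wiring of the Stack semiring: a finite set (sum) of stack operations. -/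
abbrev SWiring := Finset SOp

/-- Product of wirings: pointwise products of flows, keeping defined ones. -/
def smul (F G : SWiring) : SWiring :=
  (F ×ˢ G).biUnion fun p => (scomp p.1 p.2).toFinset

/-- Powers of a wiring (`spow F 0` is the unit wiring `{x ⊣ x}`). -/
def spow (F : SWiring) : ℕ → SWiring
  | 0 => {(([] : List ℕ), ([] : List ℕ))}
  | n + 1 => smul (spow F n) F

/-- Nilpotency: some (positive) power is 0, i.e. the empty wiring. -/
def SNilpotent (F : SWiring) : Prop := ∃ n, 0 < n ∧ spow F n = ∅

/-- Cyclicity: some power contains a cycle. -/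
def SCyclic (F : SWiring) : Prop := ∃ k, 0 < k ∧ ∃ f ∈ spow F k, isCycleS f

/-- Increasing part of a wiring. -/
def incF (F : SWiring) : SWiring := F.filter incP

/-- Decreasing part of a wiring. -/
def decF (F : SWiring) : SWiring := F.filter decP

/-- The shortcut operation `short(F) = F + F↓·F↑`. -/
def short (F : SWiring) : SWiring := F ∪ smul (decF F) (incF F)

/-- Height of a wiring (0 for the empty wiring). -/
def wheightS (F : SWiring) : ℕ := F.sup hOp

/-- The function symbols occurring in a wiring. -/
def symbolsS (F : SWiring) : Finset ℕ :=
  F.biUnion fun f => f.1.toFinset ∪ f.2.toFinset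

/-- Size of a wiring: total number of function symbol occurrences. -/
def sizeS (F : SWiring) : ℕ := ∑ f ∈ F, (f.1.length + f.2.length)

/-- The saturation `sat(F) = Σₙ shortⁿ(F)`, least fixpoint of `short`
containing `F`. -/
def satSet (F : SWiring) : Set SOp := ⋃ n, (short^[n] F : Finset SOp)

/-- Powers of a single stack operation (as a flow; `none` = 0).
`opow f 0` is the unit flow `x ⊣ x`. -/
def opow (f : SOp) : ℕ → Option SOp
  | 0 => some (([] : List ℕ), ([] : List ℕ))
  | n + 1 => (opow f n).bind fun g => scomp g f

/-! Write `f = τ ⊣ σ`. The product `g · f` is defined as soon as the right-hand term of `g` is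
comparable with `τ` for the prefix order, and its right-hand term is then `σ` followed by whatever
of `g`'s right-hand term sticks out beyond `τ`. So it suffices to find a property of the right-hand
terms of the powers `fⁿ` that implies comparability with `τ` and survives multiplication by `f`:
if `τ <+: σ`, being comparable with `τ` (the new right-hand term then extends `σ`, hence `τ`);
if `σ <+: τ`, being a prefix of `τ` (the new right-hand term is then `σ` itself). -/

theorem scomp_eq_some_of_comparable {g f : SOp} (h : g.2 <+: f.1 ∨ f.1 <+: g.2) :
    ∃ k, scomp g f = some k ∧ k.2 = f.2 ++ g.2.drop f.1.length := by
  by_cases hg : g.2 <+: f.1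
  · exact ⟨_, if_pos hg, by simp [List.drop_eq_nil_of_le hg.length_le]⟩
  · exact ⟨(g.1, f.2 ++ g.2.drop f.1.length), by simp [scomp, hg, h.resolve_left hg], rfl⟩

theorem opow_eq_some_of_invariant {f : SOp} (P : List ℕ → Prop) (h0 : P [])
    (hcomparable : ∀ l, P l → l <+: f.1 ∨ f.1 <+: l)
    (hstep : ∀ l, P l → P (f.2 ++ l.drop f.1.length)) (n : ℕ) :
    ∃ g, opow f n = some g ∧ P g.2 := by
  induction n with
  | zero => exact ⟨_, rfl, h0⟩
  | succ n ih =>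
    obtain ⟨g, hg, hP⟩ := ih
    obtain ⟨k, hk, hk2⟩ := scomp_eq_some_of_comparable (hcomparable _ hP)
    exact ⟨k, by simp [opow, hg, hk], hk2 ▸ hstep _ hP⟩

/-- if a stack operation is a cycle then all its powers `fⁿ`,
`n ≥ 1`, are nonzero. -/
theorem cycle_iterates (f : SOp) (hf : isCycleS f) :
    ∀ n, 1 ≤ n → opow f n ≠ none := by
  intro n _
  rw [Option.ne_none_iff_exists']
  rcases hf with hτσ | hστ
  · exact (opow_eq_some_of_invariant (fun l => l <+: f.1 ∨ f.1 <+: l)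
      (Or.inl List.nil_prefix) (fun _ => id)
      (fun _ _ => Or.inr (hτσ.trans (List.prefix_append _ _))) n).imp fun _ => And.left
  · exact (opow_eq_some_of_invariant (· <+: f.1) List.nil_prefix (fun _ => Or.inl)
      (fun l hl => by simpa [List.drop_eq_nil_of_le hl.length_le] using hστ) n).imp
      fun _ => And.left
end

section
/- If s = f₁,…,fₙ is an acyclic sequence of stack operations, then the height of the product f₁⋯fₙ is at most h(s)·(card(s)+1), where h(s) is the maximal height of the fᵢ and card(s) is the number of distinct flows among the fᵢ. -/
/-- Product of a sequence of stack operations (left-to-right, `none` = 0). -/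
def seqProd (s : List SOp) : Option SOp :=
  s.foldl (fun acc g => acc.bind fun a => scomp a g)
    (some (([] : List ℕ), ([] : List ℕ)))

/-- Height of a sequence: maximal height of its elements. -/
def seqHeight (s : List SOp) : ℕ := s.foldr (fun f m => max (hOp f) m) 0

/-- Cardinality of a sequence: number of distinct flows occurring in it. -/
def seqCard (s : List SOp) : ℕ := s.toFinset.card

/-- A sequence is cyclic if some contiguous nonempty subsequence has a product
which is a cycle. -/
def seqCyclic (s : List SOp) : Prop :=
  ∃ i len, 0 < len ∧ i + len ≤ s.length ∧
    ∃ p, seqProd ((s.drop i).take len) = some p ∧ isCycleS p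

/-!
Read a flow `τ ⊣ σ` as the partial map on stacks (words, top symbol first) that pops `σ` and
pushes `τ`; the resolution product is composition of these maps. The product `p` of the sequence
then maps `p.2` to `p.1` through a run of intermediate stacks, and at each step we record its
depth: how many symbols at the bottom of the stack the step leaves untouched. Since `p` is the
most general product, some step has depth `0`. Afterwards the depth grows by at most `h(s)` per
step, and wherever it attains its minimum over the remaining steps the flow used there never
occurs again: between two occurrences the symbols below that depth could be cut off, leaving a
segment whose product maps a stack to a word comparable with it for the prefix order, i.e. a
cycle. So each new flow buys at most `h(s)` of depth, the last depth is at most `h(s)·card(s)`,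
and `|p.2| ≤ h(s)·(card(s)+1)`. Reversing the sequence and swapping head and body of every flow
gives the bound on `|p.1|`.
-/

namespace SOp

open List

def act (f : SOp) (w : List ℕ) : Option (List ℕ) :=
  if f.2 <+: w then some (f.1 ++ w.drop f.2.length) else none

theorem act_eq_some_iff {f : SOp} {x y : List ℕ} :
    act f x = some y ↔ ∃ r, x = f.2 ++ r ∧ y = f.1 ++ r := by
  unfold act
  split_ifs with h
  · obtain ⟨r, rfl⟩ := h
    simp [eq_comm]
  · simp only [false_iff, not_exists, not_and]
    exact fun r hx _ => h ⟨r, hx.symm⟩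

theorem act_append (f : SOp) (r : List ℕ) : act f (f.2 ++ r) = some (f.1 ++ r) :=
  act_eq_some_iff.2 ⟨r, rfl, rfl⟩

theorem act_self (f : SOp) : act f f.2 = some f.1 := by
  simpa using act_append f []

theorem bind_act_scomp (f g : SOp) (w : List ℕ) :
    (scomp f g).bind (act · w) = (act g w).bind (act f) := by
  obtain ⟨τ, σ⟩ := f
  obtain ⟨ρ, χ⟩ := g
  ext v
  simp only [Option.bind_eq_some_iff, act_eq_some_iff, scomp]
  split_ifs with h₁ h₂
  · obtain ⟨t, rfl⟩ := h₁
    simp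
  · obtain ⟨t, rfl⟩ := h₂
    simp
  · simp only [false_and, exists_false, false_iff, not_exists, not_and]
    rintro _ ⟨x, -, rfl⟩ y hxy -
    rcases prefix_or_prefix_of_prefix (prefix_append ρ x) (hxy ▸ prefix_append σ y) with h | h
    exacts [h₂ h, h₁ h]

theorem eq_of_forall_bind_act_eq {x y : Option SOp}
    (h : ∀ w, x.bind (act · w) = y.bind (act · w)) : x = y := by
  match x, y with
  | none, none => rfl
  | some f, none => simpa [act_self] using h f.2
  | none, some g => simpa [act_self] using h g.2
  | some f, some g =>
    obtain ⟨r, hr₂, hr₁⟩ := act_eq_some_iff.1 (by simpa [act_self] using (h f.2).symm)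
    obtain ⟨r', hr₂', -⟩ := act_eq_some_iff.1 (by simpa [act_self] using h g.2)
    have hr : r = [] := by
      have := congrArg length hr₂
      have := congrArg length hr₂'
      simp_all
    subst hr
    rw [append_nil] at hr₁ hr₂
    exact congrArg some (Prod.ext hr₁ hr₂)

def applySeq : List SOp → List ℕ → Option (List ℕ)
  | [], w => some w
  | f :: t, w => (applySeq t w).bind (act f)

theorem bind_act_foldl (t : List SOp) (x : Option SOp) (w : List ℕ) :
    (t.foldl (fun acc g => acc.bind fun a => scomp a g) x).bind (act · w) =
      (applySeq t w).bind fun u => x.bind (act · u) := by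
  induction t generalizing x with
  | nil => simp [applySeq]
  | cons f t ih => simp [ih, applySeq, Option.bind_assoc, bind_act_scomp, Option.bind_comm x]

theorem bind_act_seqProd (t : List SOp) (w : List ℕ) :
    (seqProd t).bind (act · w) = applySeq t w := by
  rw [seqProd, bind_act_foldl]
  simp [act]

theorem seqProd_cons (f : SOp) (t : List SOp) :
    seqProd (f :: t) = (seqProd t).bind (scomp f) :=
  eq_of_forall_bind_act_eq fun w => by
    rw [bind_act_seqProd, applySeq, ← bind_act_seqProd, Option.bind_assoc, Option.bind_assoc]
    simp only [bind_act_scomp]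

theorem seqProd_concat (t : List SOp) (f : SOp) :
    seqProd (t ++ [f]) = (seqProd t).bind (scomp · f) := by
  simp [seqProd, foldl_append]

theorem act_rdrop {f : SOp} {x y : List ℕ} (h : act f x = some y) {k : ℕ}
    (hk : f.2.length + k ≤ x.length) : act f (x.rdrop k) = some (y.rdrop k) := by
  obtain ⟨r, rfl, rfl⟩ := act_eq_some_iff.1 h
  rw [length_append] at hk
  rw [rdrop_append_of_le_length k (by omega), rdrop_append_of_le_length k (by omega)]
  exact act_append f _

theorem isCycleS_of_act {f : SOp} {x y l : List ℕ} (h : act f x = some y) (hx : x <+: l)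
    (hy : y <+: l) : isCycleS f := by
  obtain ⟨r, rfl, rfl⟩ := act_eq_some_iff.1 h
  exact prefix_or_prefix_of_prefix ((prefix_append _ r).trans hy) ((prefix_append _ r).trans hx)

def IsRun (s : List SOp) (w : ℕ → List ℕ) : Prop :=
  ∀ i (hi : i < s.length), act s[i] (w (i + 1)) = some (w i)

theorem applySeq_eq_some_iff {s : List SOp} {x y : List ℕ} :
    applySeq s x = some y ↔ ∃ w, IsRun s w ∧ w s.length = x ∧ w 0 = y := by
  induction s generalizing y with
  | nil => exact ⟨fun h => ⟨fun _ => x, nofun, rfl, by simpa [applySeq] using h⟩,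
      fun ⟨w, _, hx, hy⟩ => by simp [applySeq, ← hx, ← hy]⟩
  | cons f s ih =>
    simp only [applySeq, Option.bind_eq_some_iff, ih]
    constructor
    · rintro ⟨_, ⟨w, hw, hx, rfl⟩, hy⟩
      refine ⟨fun | 0 => y | i + 1 => w i, ?_, hx, rfl⟩
      rintro (_ | i) hi
      exacts [hy, hw i (Nat.lt_of_succ_lt_succ hi)]
    · rintro ⟨w, hw, hx, rfl⟩
      exact ⟨w 1, ⟨fun i => w (i + 1), fun i hi => hw (i + 1) (Nat.succ_lt_succ hi), hx, rfl⟩,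
        hw 0 (Nat.succ_pos _)⟩

def depth (s : List SOp) (w : ℕ → List ℕ) (i : ℕ) : ℕ :=
  (w (i + 1)).length - s[i]!.2.length

section Run

variable {s : List SOp} {w : ℕ → List ℕ}

theorem IsRun.segment (h : IsRun s w) (a L : ℕ) :
    IsRun ((s.drop a).take L) fun i => w (a + i) := fun i hi => by
  simp only [length_take, length_drop, lt_min_iff] at hi
  simpa [getElem_take, getElem_drop, ← add_assoc] using h (a + i) (by omega)

theorem IsRun.rdrop (h : IsRun s w) {k : ℕ}
    (hk : ∀ i (hi : i < s.length), s[i].2.length + k ≤ (w (i + 1)).length) :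
    IsRun s fun i => (w i).rdrop k :=
  fun i hi => act_rdrop (h i hi) (hk i hi)

theorem IsRun.exists_append (h : IsRun s w) {i : ℕ} (hi : i < s.length) :
    ∃ r, w (i + 1) = s[i].2 ++ r ∧ w i = s[i].1 ++ r ∧ r.length = depth s w i := by
  obtain ⟨r, h₂, h₁⟩ := act_eq_some_iff.1 (h i hi)
  exact ⟨r, h₂, h₁, by simp [depth, getElem!_pos s i hi, h₂]⟩

theorem IsRun.depth_succ_le (h : IsRun s w) {i : ℕ} (hi : i + 1 < s.length) :
    depth s w (i + 1) ≤ depth s w i + s[i].2.length := by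
  obtain ⟨r, hr, -, hrd⟩ := h.exists_append (i := i) (by omega)
  obtain ⟨r', -, hr', hrd'⟩ := h.exists_append hi
  have := congrArg length hr'
  simp only [hr, length_append] at this
  omega

theorem IsRun.seqCyclic_of_getElem_eq (hw : IsRun s w) {a b : ℕ} (hab : a < b)
    (hb : b < s.length) (heq : s[a] = s[b])
    (hmin : ∀ j, a < j → j < b → depth s w a ≤ depth s w j) : seqCyclic s := by
  set seg := (s.drop a).take (b - a)
  have hlen : seg.length = b - a := by simp only [seg, length_take, length_drop]; omega
  have hrun : IsRun seg fun i => (w (a + i)).rdrop (depth s w a) :=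
    (hw.segment a (b - a)).rdrop fun i hi => by
      replace hi : i < b - a := hlen ▸ hi
      obtain ⟨r, hr, -, hrd⟩ := hw.exists_append (i := a + i) (by omega)
      have : depth s w a ≤ depth s w (a + i) := by
        rcases i.eq_zero_or_pos with rfl | hi₀
        · rfl
        · exact hmin _ (by omega) (by omega)
      simp only [getElem_take, getElem_drop, ← add_assoc, hr, length_append]
      omega
  obtain ⟨ρ, hρ, hact⟩ := Option.bind_eq_some_iff.1 <|
    (bind_act_seqProd seg _).trans (applySeq_eq_some_iff.2 ⟨_, hrun, rfl, rfl⟩)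
  refine ⟨a, b - a, by omega, by omega, ρ, hρ, isCycleS_of_act hact (l := w b) ?_ ?_⟩
  · rw [hlen, Nat.add_sub_cancel' hab.le]
    exact take_prefix _ _
  · obtain ⟨r, -, hra, hrd⟩ := hw.exists_append (i := a) (by omega)
    obtain ⟨r', -, hrb, -⟩ := hw.exists_append hb
    rw [add_zero, hra, ← hrd, rdrop_append_length, heq, hrb]
    exact prefix_append _ _

-- Minimality of the product: if no step reached the bottom symbol, the run would also succeed
-- on `p.2` with its last symbol cut off, and `p` cannot act on that stack.
theorem IsRun.exists_depth_eq_zero (hw : IsRun s w) {p : SOp} (hp : seqProd s = some p)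
    (hwp : w s.length = p.2) (hp₂ : p.2 ≠ []) : ∃ i < s.length, depth s w i = 0 := by
  by_contra! hpos
  have hrun : IsRun s fun i => (w i).rdrop 1 := hw.rdrop fun i hi => by
    obtain ⟨r, hr, -, hrd⟩ := hw.exists_append hi
    have := hpos i hi
    rw [hr, length_append]
    omega
  have hact := (bind_act_seqProd s _).trans (applySeq_eq_some_iff.2 ⟨_, hrun, rfl, rfl⟩)
  rw [hp, Option.bind_some, hwp] at hact
  obtain ⟨r, hr, -⟩ := act_eq_some_iff.1 hact
  have := congrArg length hr
  simp only [List.rdrop, length_take, length_append] at this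
  exact hp₂ (length_eq_zero_iff.1 (by omega))

end Run

-- Jump to a minimum `m` of `e` after `i`: then `e m ≤ e (i + 1) ≤ e i + h`, and the label `f m`
-- is not seen again after `m`.
theorem le_add_mul_card_image {α : Type*} [DecidableEq α] (e : ℕ → ℕ) (f : ℕ → α)
    {n h : ℕ}
    (hstep : ∀ i, i + 1 < n → e (i + 1) ≤ e i + h)
    (hne : ∀ a b, a < b → b < n → (∀ j, a < j → j < n → e a ≤ e j) → f a ≠ f b)
    (i : ℕ) (hi : i < n) : e (n - 1) ≤ e i + h * ((Finset.Ioo i n).image f).card := by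
  by_cases hlast : i + 1 = n
  · rw [show n - 1 = i by omega]
    exact Nat.le_add_right _ _
  obtain ⟨m, hm, hmin⟩ :=
    (Finset.Ioo i n).exists_min_image e ⟨i + 1, Finset.mem_Ioo.2 ⟨by omega, by omega⟩⟩
  obtain ⟨him, hmn⟩ := Finset.mem_Ioo.1 hm
  have ih := le_add_mul_card_image e f hstep hne m hmn
  have hcard : ((Finset.Ioo m n).image f).card + 1 ≤ ((Finset.Ioo i n).image f).card := by
    have hsub : (Finset.Ioo m n).image f ⊆ (Finset.Ioo i n).image f :=
      Finset.image_subset_image (Finset.Ioo_subset_Ioo_left him.le)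
    have hfm : f m ∉ (Finset.Ioo m n).image f := by
      simp only [Finset.mem_image, Finset.mem_Ioo, not_exists, not_and]
      exact fun b ⟨hmb, hbn⟩ hfb => hne m b hmb hbn
        (fun j hmj hjn => hmin j (Finset.mem_Ioo.2 ⟨by omega, hjn⟩)) hfb.symm
    exact Finset.card_lt_card <| (Finset.ssubset_iff_of_subset hsub).2
      ⟨f m, Finset.mem_image_of_mem f hm, hfm⟩
  have hm_le : e m ≤ e (i + 1) := hmin _ (Finset.mem_Ioo.2 ⟨by omega, by omega⟩)
  calc e (n - 1)
      ≤ e m + h * ((Finset.Ioo m n).image f).card := ih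
    _ ≤ e i + h * (((Finset.Ioo m n).image f).card + 1) := by
        linarith [hstep i (by omega)]
    _ ≤ e i + h * ((Finset.Ioo i n).image f).card := by gcongr
termination_by n - i

theorem seqHeight_eq_sup (s : List SOp) : seqHeight s = s.toFinset.sup hOp := by
  induction s with
  | nil => rfl
  | cons f s ih => simp [seqHeight, ← ih]

theorem hOp_le_seqHeight {s : List SOp} {f : SOp} (h : f ∈ s) : hOp f ≤ seqHeight s :=
  seqHeight_eq_sup s ▸ Finset.le_sup (mem_toFinset.2 h)

theorem length_snd_le_of_not_seqCyclic {s : List SOp} (hacyc : ¬ seqCyclic s) {p : SOp}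
    (hp : seqProd s = some p) : p.2.length ≤ seqHeight s * (seqCard s + 1) := by
  obtain ⟨w, hw, hwp, -⟩ := applySeq_eq_some_iff.1 <| by
    rw [← bind_act_seqProd, hp]
    exact act_self p
  rcases eq_or_ne p.2 [] with hp₂ | hp₂
  · simp [hp₂]
  obtain ⟨i₀, hi₀, hd₀⟩ := hw.exists_depth_eq_zero hp hwp hp₂
  set n := s.length
  set H := seqHeight s
  have hσ : ∀ i (hi : i < n), s[i].2.length ≤ H := fun i hi =>
    (le_max_right _ _).trans (hOp_le_seqHeight (getElem_mem hi))
  have hstep : ∀ i, i + 1 < n → depth s w (i + 1) ≤ depth s w i + H := fun i hi =>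
    (hw.depth_succ_le hi).trans (by grw [hσ i (by omega)])
  have hfresh : ∀ a b, a < b → b < n →
      (∀ j, a < j → j < n → depth s w a ≤ depth s w j) → s[a]! ≠ s[b]! := by
    intro a b hab hb hmin heq
    rw [getElem!_pos s a (by omega), getElem!_pos s b hb] at heq
    exact hacyc <| hw.seqCyclic_of_getElem_eq hab hb heq fun j haj hjb => hmin j haj (hjb.trans hb)
  have hcard : ((Finset.Ioo i₀ n).image fun i => s[i]!).card ≤ seqCard s := by
    refine Finset.card_le_card fun f hf => ?_
    obtain ⟨i, hi, rfl⟩ := Finset.mem_image.1 hf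
    have hin : i < n := (Finset.mem_Ioo.1 hi).2
    rw [getElem!_pos s i hin]
    exact mem_toFinset.2 (getElem_mem hin)
  obtain ⟨r, hr, -, hrd⟩ := hw.exists_append (i := n - 1) (by omega)
  calc p.2.length = s[n - 1].2.length + depth s w (n - 1) := by
        rw [← hwp, ← hrd, ← length_append, ← hr, Nat.sub_add_cancel (by omega)]
    _ ≤ H + H * seqCard s := by
        grw [hσ _ (by omega), le_add_mul_card_image _ _ hstep hfresh i₀ hi₀, hd₀, hcard,
          zero_add]
    _ = H * (seqCard s + 1) := by ring

def dual (s : List SOp) : List SOp := (s.map Prod.swap).reverse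

theorem length_dual (s : List SOp) : (dual s).length = s.length := by
  simp [dual]

theorem scomp_swap (f g : SOp) : scomp g.swap f.swap = (scomp f g).map Prod.swap := by
  simp only [scomp, Prod.fst_swap, Prod.snd_swap]
  by_cases h₁ : f.2 <+: g.1 <;> by_cases h₂ : g.1 <+: f.2
  · rw [h₁.eq_of_length (le_antisymm h₁.length_le h₂.length_le)]
    simp
  all_goals simp [h₁, h₂]

theorem seqProd_dual (s : List SOp) : seqProd (dual s) = (seqProd s).map Prod.swap := by
  induction s with
  | nil => rfl
  | cons f s ih =>
    simp only [dual, map_cons, reverse_cons] at ih ⊢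
    simp [seqProd_concat, seqProd_cons, ih, Option.bind_map, Option.map_bind, scomp_swap]

theorem toFinset_dual (s : List SOp) : (dual s).toFinset = s.toFinset.image Prod.swap := by
  ext
  simp [dual]

theorem seqHeight_dual (s : List SOp) : seqHeight (dual s) = seqHeight s := by
  rw [seqHeight_eq_sup, seqHeight_eq_sup, toFinset_dual, Finset.sup_image]
  congr 1
  funext f
  simp [hOp, max_comm]

theorem seqCard_dual (s : List SOp) : seqCard (dual s) = seqCard s := by
  rw [seqCard, toFinset_dual, Finset.card_image_of_injective _ Prod.swap_injective, seqCard]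

theorem drop_take_dual {s : List SOp} {i len : ℕ} (h : i + len ≤ s.length) :
    ((dual s).drop i).take len = dual ((s.drop (s.length - i - len)).take len) := by
  rw [dual, dual, map_take, map_drop, drop_reverse, take_reverse, length_take, length_map,
    drop_take, min_eq_left (Nat.sub_le _ _), Nat.sub_sub_self (by omega : len ≤ s.length - i)]

theorem seqCyclic_of_dual {s : List SOp} (h : seqCyclic (dual s)) : seqCyclic s := by
  obtain ⟨i, len, hlen, hle, c, hc, hcyc⟩ := h
  rw [length_dual] at hle
  rw [drop_take_dual hle, seqProd_dual, Option.map_eq_some_iff] at hc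
  obtain ⟨q, hq, rfl⟩ := hc
  exact ⟨s.length - i - len, len, hlen, by omega, q, hq, or_comm.1 hcyc⟩

end SOp

theorem acyclic_seq_height_general (s : List SOp)
    (hacyc : ¬ seqCyclic s) :
    ∀ p, seqProd s = some p → hOp p ≤ seqHeight s * (seqCard s + 1) := by
  intro p hp
  have hfst := SOp.length_snd_le_of_not_seqCyclic (s := SOp.dual s) (p := p.swap)
    (fun h => hacyc (SOp.seqCyclic_of_dual h)) (by rw [SOp.seqProd_dual, hp]; rfl)
  rw [SOp.seqHeight_dual, SOp.seqCard_dual] at hfst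
  exact max_le hfst (SOp.length_snd_le_of_not_seqCyclic hacyc hp)

/-- acyclic sequence lemma: if `s = f₁,…,fₙ` is an acyclic
sequence of stack operations then `h(f₁⋯fₙ) ≤ h(s)·(card(s)+1)`. -/
theorem acyclic_seq_height (s : List SOp) (hne : s ≠ [])
    (hacyc : ¬ seqCyclic s) :
    ∀ p, seqProd s = some p → hOp p ≤ seqHeight s * (seqCard s + 1) :=
  acyclic_seq_height_general s hacyc
end

section
/- Let f = τ(x) ⊣ σ(x) be a decreasing stack operation and g = ρ(x) ⊣ χ(x) an increasing stack operation. Then h(fg) ≤ max(h(f), h(g)), where h denotes height and h(0) = 0. -/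
theorem List.length_append_drop_le {α : Type*} {a b c : List α}
    (hab : a.length ≤ b.length) (hbc : b.length ≤ c.length) :
    (a ++ c.drop b.length).length ≤ c.length := by
  simp only [List.length_append, List.length_drop]
  omega

theorem hOp_le_of_decP_of_isPrefix {f g : SOp} (hf : decP f) (h : f.2 <+: g.1) :
    hOp (f.1 ++ g.1.drop f.2.length, g.2) ≤ hOp g :=
  max_le_max_right _ (List.length_append_drop_le hf h.length_le)

theorem hOp_le_of_incP_of_isPrefix {f g : SOp} (hg : incP g) (h : g.1 <+: f.2) :
    hOp (f.1, g.2 ++ f.2.drop g.1.length) ≤ hOp f :=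
  max_le_max_left _ (List.length_append_drop_le hg h.length_le)

/-- stability of height: for a decreasing stack operation `f`
and an increasing one `g`, `h(fg) ≤ max(h(f), h(g))` (with `h(0) = 0`). -/
theorem height_stable (f g : SOp) (hf : decP f) (hg : incP g) :
    (scomp f g).elim 0 hOp ≤ max (hOp f) (hOp g) := by
  unfold scomp
  split_ifs with hfg hgf
  · exact (hOp_le_of_decP_of_isPrefix hf hfg).trans (le_max_right _ _)
  · exact (hOp_le_of_incP_of_isPrefix hg hgf).trans (le_max_left _ _)
  · exact Nat.zero_le _
end

section
/- For any wiring F in the Stack semiring and any n, the height of shortⁿ(F) equals the height of F, where short(F) := F + F↓·F↑, F↓ and F↑ being the decreasing and increasing parts of F. -/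
/- When `d.2` is a prefix of `i.1`, the leftover of `i.1` is appended to `d.1`, and
`d.1` is no longer than `d.2` because `d` decreases; symmetrically, when `i.1` is a
prefix of `d.2`, the leftover lands on `i.2`, no longer than `i.1` because `i`
increases. -/
theorem hOp_le_of_scomp_eq_some {d i f : SOp} (hd : decP d) (hi : incP i)
    (h : scomp d i = some f) : hOp f ≤ max (hOp d) (hOp i) := by
  unfold decP at hd
  unfold incP at hi
  unfold scomp at h
  split_ifs at h with hdi hid
  · obtain ⟨t, ht⟩ := hdi
    cases h
    simp only [hOp, ← ht, List.length_append, List.length_drop] at hd ⊢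
    omega
  · obtain ⟨t, ht⟩ := hid
    cases h
    simp only [hOp, ← ht, List.length_append, List.length_drop] at hi ⊢
    omega

theorem wheightS_smul_decF_incF_le (F : SWiring) :
    wheightS (smul (decF F) (incF F)) ≤ wheightS F := by
  refine Finset.sup_le fun f hf => ?_
  simp only [smul, Finset.mem_biUnion, Finset.mem_product, Option.mem_toFinset,
    Option.mem_def] at hf
  obtain ⟨⟨d, i⟩, ⟨hd, hi⟩, hdi⟩ := hf
  obtain ⟨hdF, hdec⟩ := Finset.mem_filter.mp hd
  obtain ⟨hiF, hinc⟩ := Finset.mem_filter.mp hi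
  calc hOp f ≤ max (hOp d) (hOp i) := hOp_le_of_scomp_eq_some hdec hinc hdi
    _ ≤ wheightS F := max_le (Finset.le_sup hdF) (Finset.le_sup hiF)

theorem wheightS_short (F : SWiring) : wheightS (short F) = wheightS F := by
  rw [wheightS, short, Finset.sup_union]
  exact sup_eq_left.mpr (wheightS_smul_decF_incF_le F)

/-- the shortcut operation preserves the height of wirings:
`h(shortⁿ(F)) = h(F)` for all `n`. -/
theorem short_height (F : SWiring) (n : ℕ) :
    wheightS (short^[n] F) = wheightS F :=
  congrFun (Function.iterate_invariant (funext wheightS_short) n) F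
end

section
/- Let F be a wiring in the Stack semiring and S the number of distinct function symbols appearing in F. If n ≥ (S^{h(F)} + S^{h(F)-1} + ⋯ + 1)², then shortⁿ(F) = sat(F), i.e., the iteration of the shortcut operation stabilizes after at most that many steps. -/
/-! Every element of `shortⁿ(F)` has height at most `h(F)` and uses only symbols of `F`, so
all iterates live in a fixed finite set of at most `(S^{h(F)} + ⋯ + 1)²` stack operations.
Since `short` is inflationary, the iterates form an increasing chain of subsets of that set, which
must become stationary before its length exceeds the cardinality bound. -/

section InflationaryIterate

variable {α : Type*} {f : Finset α → Finset α} {x : Finset α} {B : ℕ}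

theorem exists_isFixedPt_iterate_of_card_le (hf : ∀ s, s ⊆ f s)
    (hB : ∀ k, (f^[k] x).card ≤ B) : ∃ m ≤ B, Function.IsFixedPt f (f^[m] x) := by
  by_contra! hmoving
  have card_ge : ∀ m ≤ B + 1, m ≤ (f^[m] x).card := by
    intro m
    induction m with
    | zero => simp
    | succ m ih =>
      intro hm
      have hstrict : f^[m] x ⊂ f^[m + 1] x := by
        rw [Function.iterate_succ_apply']
        exact Finset.ssubset_iff_subset_ne.2 ⟨hf _, Ne.symm (hmoving m (by omega))⟩
      have := Finset.card_lt_card hstrict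
      have := ih (by omega)
      omega
  have := card_ge (B + 1) le_rfl
  have := hB (B + 1)
  omega

theorem iUnion_iterate_eq_of_card_le (hf : ∀ s, s ⊆ f s)
    (hB : ∀ k, (f^[k] x).card ≤ B) {n : ℕ} (hn : B ≤ n) :
    ⋃ k, (f^[k] x : Set α) = f^[n] x := by
  obtain ⟨m, hmB, hfix⟩ := exists_isFixedPt_iterate_of_card_le hf hB
  have stable : ∀ k, m ≤ k → f^[k] x = f^[m] x := fun k hk => by
    rw [← Nat.sub_add_cancel hk, Function.iterate_add_apply, Function.iterate_fixed hfix]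
  have mono : Monotone fun k => f^[k] x :=
    fun i j hij => Function.monotone_iterate_of_id_le hf hij x
  refine (Set.iUnion_subset fun k => ?_).antisymm
    (Set.subset_iUnion (fun k => (f^[k] x : Set α)) n)
  calc (f^[k] x : Set α) ⊆ f^[max k n] x := Finset.coe_subset.2 (mono (le_max_left k n))
    _ = f^[n] x := by rw [stable _ (by omega), stable n (by omega)]

end InflationaryIterate

section BoundedWords

variable {α : Type*} [DecidableEq α]

def wordsUpTo (s : Finset α) : ℕ → Finset (List α)
  | 0 => {[]}
  | n + 1 => insert [] ((s ×ˢ wordsUpTo s n).image fun p => p.1 :: p.2)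

theorem mem_wordsUpTo {s : Finset α} {n : ℕ} {l : List α} :
    l ∈ wordsUpTo s n ↔ l.length ≤ n ∧ ∀ a ∈ l, a ∈ s := by
  induction n generalizing l with
  | zero => cases l <;> simp [wordsUpTo]
  | succ n ih =>
    cases l with
    | nil => simp [wordsUpTo]
    | cons a l => simp [wordsUpTo, ih, and_left_comm]

theorem card_wordsUpTo_le (s : Finset α) (n : ℕ) :
    (wordsUpTo s n).card ≤ ∑ i ∈ Finset.range (n + 1), s.card ^ i := by
  induction n with
  | zero => simp [wordsUpTo]
  | succ n ih =>
    calc (wordsUpTo s (n + 1)).card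
        ≤ ((s ×ˢ wordsUpTo s n).image fun p => p.1 :: p.2).card + 1 := Finset.card_insert_le _ _
      _ ≤ s.card * (wordsUpTo s n).card + 1 := by
        grw [Finset.card_image_le, Finset.card_product]
      _ ≤ s.card * ∑ i ∈ Finset.range (n + 1), s.card ^ i + 1 := by grw [ih]
      _ = ∑ i ∈ Finset.range (n + 2), s.card ^ i := geom_sum_succ.symm

end BoundedWords

def stackOps (s : Finset ℕ) (h : ℕ) : Finset SOp := wordsUpTo s h ×ˢ wordsUpTo s h

theorem card_stackOps_le (s : Finset ℕ) (h : ℕ) :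
    (stackOps s h).card ≤ (∑ i ∈ Finset.range (h + 1), s.card ^ i) ^ 2 := by
  rw [stackOps, Finset.card_product, sq]
  exact Nat.mul_le_mul (card_wordsUpTo_le s h) (card_wordsUpTo_le s h)

theorem scomp_mem_stackOps {s : Finset ℕ} {h : ℕ} {f g r : SOp}
    (hf : f ∈ stackOps s h) (hg : g ∈ stackOps s h) (hfdec : decP f) (hginc : incP g)
    (hr : scomp f g = some r) : r ∈ stackOps s h := by
  simp only [stackOps, Finset.mem_product, mem_wordsUpTo] at hf hg ⊢
  unfold scomp at hr
  split_ifs at hr with hpre hpre'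
  · have := hpre.length_le
    cases hr
    refine ⟨⟨?_, ?_⟩, hg.2⟩
    · simp only [List.length_append, List.length_drop]
      unfold decP at hfdec
      omega
    · simp only [List.mem_append]
      exact fun a ha => ha.elim (hf.1.2 a) (fun ha => hg.1.2 a (List.mem_of_mem_drop ha))
  · have := hpre'.length_le
    cases hr
    refine ⟨hf.1, ?_, ?_⟩
    · simp only [List.length_append, List.length_drop]
      unfold incP at hginc
      omega
    · simp only [List.mem_append]
      exact fun a ha => ha.elim (hg.2.2 a) (fun ha => hf.2.2 a (List.mem_of_mem_drop ha))

theorem short_subset_stackOps {s : Finset ℕ} {h : ℕ} {G : SWiring} (hG : G ⊆ stackOps s h) :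
    short G ⊆ stackOps s h := by
  refine Finset.union_subset hG fun r hr => ?_
  simp only [smul, decF, incF, Finset.mem_biUnion, Finset.mem_product, Finset.mem_filter,
    Option.mem_toFinset] at hr
  obtain ⟨⟨f, g⟩, ⟨⟨hf, hfdec⟩, hg, hginc⟩, hfg⟩ := hr
  exact scomp_mem_stackOps (hG hf) (hG hg) hfdec hginc hfg

theorem subset_stackOps_symbolsS_wheightS (F : SWiring) :
    F ⊆ stackOps (symbolsS F) (wheightS F) := by
  intro f hf
  have hheight : hOp f ≤ wheightS F := Finset.le_sup hf
  have hsymb : ∀ a, a ∈ f.1 ∨ a ∈ f.2 → a ∈ symbolsS F := fun a ha =>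
    Finset.mem_biUnion.2 ⟨f, hf, by simpa using ha⟩
  simp only [stackOps, Finset.mem_product, mem_wordsUpTo]
  exact ⟨⟨le_of_max_le_left hheight, fun a ha => hsymb a (.inl ha)⟩,
    ⟨le_of_max_le_right hheight, fun a ha => hsymb a (.inr ha)⟩⟩

theorem card_iterate_short_le (F : SWiring) (k : ℕ) :
    (short^[k] F).card ≤
      (∑ i ∈ Finset.range (wheightS F + 1), (symbolsS F).card ^ i) ^ 2 := by
  have hmaps : Set.MapsTo short {G | G ⊆ stackOps (symbolsS F) (wheightS F)}
      {G | G ⊆ stackOps (symbolsS F) (wheightS F)} := fun _ => short_subset_stackOps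
  exact (Finset.card_le_card (hmaps.iterate k (subset_stackOps_symbolsS_wheightS F))).trans
    (card_stackOps_le _ _)

/-- stability of saturation: with `S` the number of distinct
function symbols of `F`, if `n ≥ (S^{h(F)} + ⋯ + S + 1)²` then
`shortⁿ(F) = sat(F)`. -/
theorem saturation_stabilizes (F : SWiring) (n : ℕ)
    (hn : (∑ i ∈ Finset.range (wheightS F + 1), (symbolsS F).card ^ i) ^ 2 ≤ n) :
    ((short^[n] F : Finset SOp) : Set SOp) = satSet F :=
  (iUnion_iterate_eq_of_card_le (fun _ => Finset.subset_union_left)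
    (card_iterate_short_le F) hn).symm
end

section
/- For stack operations f and g, the product fg is a cycle if and only if gf is a cycle. -/
/-! Write `f = τ ⊣ σ` and `g = ρ ⊣ χ` and suppose `σ` is a prefix of `ρ`, say
`ρ = σu`, so that `fg = τu ⊣ χ`. If `fg` is a cycle then `τ` and `χ` are comparable. Either
`χ` is a prefix of `τ`, and then `gf = σuw ⊣ σ` is a cycle outright, or `χ = τv`, and then
`gf = σu ⊣ σv` and `fg = τu ⊣ τv` are both cycles exactly when `u` and `v` are comparable.
The case where `ρ` is a prefix of `σ` is the mirror image under `τ ⊣ σ ↦ σ ⊣ τ`, which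
reverses products and preserves cycles. -/

def ProdIsCycle (f g : SOp) : Prop := ∃ p, scomp f g = some p ∧ isCycleS p

lemma isCycleS_swap_iff (p : SOp) : isCycleS p.swap ↔ isCycleS p := Or.comm

lemma isCycleS_append_left_iff (l u v : List ℕ) : isCycleS (l ++ u, l ++ v) ↔ isCycleS (u, v) := by
  simp only [isCycleS, List.prefix_append_right_inj]

lemma isCycleS.of_append_left {a u d : List ℕ} (h : isCycleS (a ++ u, d)) : isCycleS (a, d) := by
  rcases h with h | h
  · exact Or.inl ((List.prefix_append a u).trans h)
  · exact List.prefix_or_prefix_of_prefix (List.prefix_append a u) h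

lemma scomp_append_left (x y w z : List ℕ) : scomp (x, y) (y ++ w, z) = some (x ++ w, z) := by
  simp [scomp]

lemma scomp_append_right (x y w z : List ℕ) : scomp (x, y ++ w) (y, z) = some (x, z ++ w) := by
  by_cases hw : w = []
  · subst hw; simp [scomp]
  · have : ¬ y ++ w <+: y := fun h => hw (by simpa using h.length_le)
    simp [scomp, this]

lemma scomp_swap (f g : SOp) : scomp f g = (scomp g.swap f.swap).map Prod.swap := by
  obtain ⟨a, b⟩ := f
  obtain ⟨c, d⟩ := g
  by_cases hbc : b <+: c
  · obtain ⟨u, rfl⟩ := hbc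
    rw [Prod.swap_prod_mk, Prod.swap_prod_mk, scomp_append_left, scomp_append_right]
    rfl
  · by_cases hcb : c <+: b
    · obtain ⟨u, rfl⟩ := hcb
      rw [Prod.swap_prod_mk, Prod.swap_prod_mk, scomp_append_left, scomp_append_right]
      rfl
    · simp [scomp, hbc, hcb]

lemma prodIsCycle_swap_iff (f g : SOp) : ProdIsCycle g.swap f.swap ↔ ProdIsCycle f g := by
  simp only [ProdIsCycle, scomp_swap f g, Option.map_eq_some_iff]
  constructor
  · rintro ⟨p, hp, hc⟩
    exact ⟨p.swap, ⟨p, hp, rfl⟩, (isCycleS_swap_iff p).mpr hc⟩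
  · rintro ⟨_, ⟨p, hp, rfl⟩, hc⟩
    exact ⟨p, hp, (isCycleS_swap_iff p).mp hc⟩

lemma ProdIsCycle.rotate_of_prefix {a b u d : List ℕ} (h : ProdIsCycle (a, b) (b ++ u, d)) :
    ProdIsCycle (b ++ u, d) (a, b) := by
  obtain ⟨p, hp, hc⟩ := h
  rw [scomp_append_left, Option.some.injEq] at hp
  subst hp
  have had : a <+: d ∨ d <+: a := hc.of_append_left
  rcases had with ⟨v, rfl⟩ | ⟨w, rfl⟩
  · refine ⟨_, scomp_append_right _ _ _ _, ?_⟩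
    rwa [isCycleS_append_left_iff, ← isCycleS_append_left_iff a]
  · refine ⟨_, scomp_append_left _ _ _ _, Or.inr ?_⟩
    rw [List.append_assoc]
    exact List.prefix_append _ _

lemma ProdIsCycle.rotate {f g : SOp} (h : ProdIsCycle f g) : ProdIsCycle g f := by
  obtain ⟨a, b⟩ := f
  obtain ⟨c, d⟩ := g
  by_cases hbc : b <+: c
  · obtain ⟨u, rfl⟩ := hbc
    exact h.rotate_of_prefix
  · by_cases hcb : c <+: b
    · obtain ⟨u, rfl⟩ := hcb
      rw [← prodIsCycle_swap_iff] at h ⊢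
      exact h.rotate_of_prefix
    · obtain ⟨p, hp, -⟩ := h
      simp [scomp, hbc, hcb] at hp

/-- rotation: for stack operations `f`, `g`, the product `fg`
is a cycle iff `gf` is a cycle. -/
theorem rotation_lemma (f g : SOp) :
    (∃ p, scomp f g = some p ∧ isCycleS p) ↔
    (∃ q, scomp g f = some q ∧ isCycleS q) :=
  ⟨ProdIsCycle.rotate, ProdIsCycle.rotate⟩
end

section
/- A unary query Q = (D, P, G) succeeds if and only if the flow ACCEPT(x) ⊣ START(x) belongs to ⟦G⟧ Pⁿ ⟦D⟧ for some n, where ⟦D⟧ and ⟦G⟧ are the Stack-semiring encodings of the data and goal. -/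
/-! Unary logic programming.  A closed unary term `τ(c)` is a pair
`(τ, c)` of a sequence of unary symbols and a constant.  A unary program is a
wiring of the Stack semiring, its elements read as clauses `τ(x) ⊣ σ(x)`. -/

/-- A closed unary term `τ(c)`. -/
abbrev CT := List ℕ × ℕ

/-- Derivability by resolution from the facts `d ⊣` (`d ∈ D`) and the clauses
`τ(x) ⊣ σ(x)` of `P`. -/
inductive Derive (D : Finset CT) (P : SWiring) : CT → Prop
  | fact {d : CT} : d ∈ D → Derive D P d
  | step {f : SOp} {μ : List ℕ} {c : ℕ} :
      f ∈ P → Derive D P (f.2 ++ μ, c) → Derive D P (f.1 ++ μ, c)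

/-- A unary query `(D, P, G)` succeeds when the goal is derivable. -/
def Succeeds (D : Finset CT) (P : SWiring) (G : CT) : Prop := Derive D P G

/-- Symbol renaming keeping program/data symbols clear of the fresh
symbols: unary program symbols `s ↦ 2s+3`. -/
def rl (s : ℕ) : ℕ := 2 * s + 3

/-- The unary symbol `𝐜` associated to the constant `c`. -/
def cSym (c : ℕ) : ℕ := 2 * c + 2

/-- The fresh unary symbol `START`. -/
def START : ℕ := 0

/-- The fresh unary symbol `ACCEPT`. -/
def ACCEPT : ℕ := 1

/-- Encoding of a unary data: `⟦D⟧ = { τ(𝐜(x)) ⊣ START(x) : τ(c) ∈ D }`. -/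
def encD (D : Finset CT) : SWiring :=
  D.image fun d => (d.1.map rl ++ [cSym d.2], [START])

/-- Encoding of a unary goal `G = τ(c)`: `⟦G⟧ = ACCEPT(x) ⊣ τ(𝐜(x))`. -/
def encG (G : CT) : SOp := ([ACCEPT], G.1.map rl ++ [cSym G.2])

/-- The program part of a query, with its symbols renamed by `rl`. -/
def encP (P : SWiring) : SWiring := P.image fun f => (f.1.map rl, f.2.map rl)

/-!
A stack operation `τ ⊣ σ` acts on words by `σ ++ μ ↦ τ ++ μ`; this action is faithful and turns
the resolution product into composition of partial maps, which makes the product associative.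
Under the encoding a closed term `τ(c)` becomes the flow `τ 𝐜 ⊣ START`, and composing it with an
encoded clause `ρ ⊣ σ` is exactly one resolution step from `σ μ (c)` to `ρ μ (c)`: the symbol `𝐜`
occurs in no clause, so the clause body must be a prefix of `τ`. Hence `Pⁿ ⟦D⟧` consists of the
encodings of terms derivable in `n` steps, and `⟦G⟧` composes with one of them to
`ACCEPT ⊣ START` exactly when it encodes the goal.
-/

lemma scomp_eq_some_iff {f g p : SOp} :
    scomp f g = some p ↔
      (∃ u, g.1 = f.2 ++ u ∧ p = (f.1 ++ u, g.2)) ∨ ∃ u, f.2 = g.1 ++ u ∧ p = (f.1, g.2 ++ u) := by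
  obtain ⟨a, b⟩ := f
  obtain ⟨c, d⟩ := g
  unfold scomp
  split_ifs with hbc hcb
  · obtain ⟨u, rfl⟩ := hbc
    aesop
  · obtain ⟨u, rfl⟩ := hcb
    aesop
  · simp only [false_iff, not_or, not_exists, not_and]
    exact ⟨fun u h _ => hbc ⟨u, h.symm⟩, fun u h _ => hcb ⟨u, h.symm⟩⟩

lemma scomp_eq_none_iff {f g : SOp} : scomp f g = none ↔ ¬(f.2 <+: g.1 ∨ g.1 <+: f.2) := by
  unfold scomp
  split_ifs <;> simp_all

lemma scomp_mk_eq_some_mk_iff {a b c d : List ℕ} : scomp (a, b) (c, d) = some (a, d) ↔ b = c := by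
  rw [scomp_eq_some_iff]
  simp [eq_comm]

def act (f : SOp) (w : List ℕ) : Option (List ℕ) :=
  if f.2 <+: w then some (f.1 ++ w.drop f.2.length) else none

lemma act_eq_some_iff {f : SOp} {w v : List ℕ} :
    act f w = some v ↔ ∃ μ, w = f.2 ++ μ ∧ v = f.1 ++ μ := by
  unfold act
  split_ifs with h
  · obtain ⟨μ, rfl⟩ := h
    simp [eq_comm]
  · simp only [false_iff, not_exists, not_and]
    exact fun μ hw _ => h ⟨μ, hw.symm⟩

lemma act_self (f : SOp) : act f f.2 = some f.1 :=
  act_eq_some_iff.2 ⟨[], by simp, by simp⟩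

lemma act_injective : Function.Injective act := by
  intro p q h
  obtain ⟨μ, hμ, hp⟩ := act_eq_some_iff.1 ((congrFun h p.2).symm.trans (act_self p))
  obtain ⟨ν, hν, -⟩ := act_eq_some_iff.1 ((congrFun h q.2).trans (act_self q))
  have hp₂ : p.2 = p.2 ++ (ν ++ μ) := by rw [← List.append_assoc, ← hν]; exact hμ
  obtain rfl : μ = [] := (List.append_eq_nil_iff.1 (List.self_eq_append_right.1 hp₂)).2
  exact Prod.ext (by simpa using hp) (by simpa using hμ)

def Represents (o : Option SOp) (φ : List ℕ → Option (List ℕ)) : Prop :=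
  ∀ w, o.bind (fun p => act p w) = φ w

lemma Represents.unique {o o' : Option SOp} {φ : List ℕ → Option (List ℕ)}
    (h : Represents o φ) (h' : Represents o' φ) : o = o' := by
  rcases o with _ | p <;> rcases o' with _ | q
  · rfl
  · simpa [act_self] using (h q.2).trans (h' q.2).symm
  · simpa [act_self] using (h p.2).trans (h' p.2).symm
  · exact congrArg some (act_injective (funext fun w => by simpa using (h w).trans (h' w).symm))

lemma represents_scomp (f g : SOp) : Represents (scomp f g) fun w => (act g w).bind (act f) := by
  intro w
  rcases hfg : scomp f g with _ | p
  · rcases hg : act g w with _ | y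
    · simp [hg]
    rcases hf : act f y with _ | v
    · simp [hg, hf]
    obtain ⟨μ, rfl, rfl⟩ := act_eq_some_iff.1 hg
    obtain ⟨ν, hν, -⟩ := act_eq_some_iff.1 hf
    exact absurd (List.prefix_or_prefix_of_prefix ⟨ν, hν.symm⟩ (List.prefix_append _ _))
      (scomp_eq_none_iff.1 hfg)
  · refine Option.ext fun v => ?_
    obtain ⟨a, b⟩ := f
    obtain ⟨c, d⟩ := g
    simp only [Option.bind_some, act_eq_some_iff, Option.bind_eq_some_iff]
    rcases scomp_eq_some_iff.1 hfg with ⟨u, rfl, rfl⟩ | ⟨u, rfl, rfl⟩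
    · aesop
    · aesop

lemma Represents.bind_scomp_right {o : Option SOp} {φ : List ℕ → Option (List ℕ)}
    (h : Represents o φ) (k : SOp) :
    Represents (o.bind fun p => scomp p k) fun w => (act k w).bind φ := by
  rcases o with _ | p
  · have hφ : ∀ w, φ w = none := fun w => (h w).symm
    intro w
    cases act k w <;> simp [hφ]
  · obtain rfl : φ = act p := funext fun w => (h w).symm
    exact represents_scomp p k

lemma Represents.bind_scomp_left {o : Option SOp} {ψ : List ℕ → Option (List ℕ)}
    (h : Represents o ψ) (f : SOp) :
    Represents (o.bind fun r => scomp f r) fun w => (ψ w).bind (act f) := by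
  rcases o with _ | r
  · have hψ : ∀ w, ψ w = none := fun w => (h w).symm
    intro w
    simp [hψ]
  · obtain rfl : ψ = act r := funext fun w => (h w).symm
    exact represents_scomp f r

lemma scomp_assoc (f g k : SOp) :
    (scomp f g).bind (fun p => scomp p k) = (scomp g k).bind (fun r => scomp f r) :=
  ((represents_scomp f g).bind_scomp_right k).unique <| by
    simpa only [Option.bind_assoc] using (represents_scomp g k).bind_scomp_left f

lemma one_scomp (g : SOp) : scomp ([], []) g = some g :=
  scomp_eq_some_iff.2 <| .inl ⟨g.1, rfl, rfl⟩

lemma scomp_one (f : SOp) : scomp f ([], []) = some f :=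
  scomp_eq_some_iff.2 <| .inr ⟨f.2, rfl, rfl⟩

namespace SWiring

lemma mem_smul {A B : SWiring} {x : SOp} :
    x ∈ smul A B ↔ ∃ a ∈ A, ∃ b ∈ B, scomp a b = some x := by
  simp [smul]

lemma mem_smul_smul {A B C : SWiring} {x : SOp} :
    x ∈ smul (smul A B) C ↔
      ∃ a ∈ A, ∃ b ∈ B, ∃ c ∈ C, (scomp a b).bind (fun p => scomp p c) = some x := by
  simp only [mem_smul]
  constructor
  · rintro ⟨p, ⟨a, ha, b, hb, hab⟩, c, hc, hpc⟩
    exact ⟨a, ha, b, hb, c, hc, by rwa [hab, Option.bind_some]⟩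
  · rintro ⟨a, ha, b, hb, c, hc, habc⟩
    obtain ⟨p, hab, hpc⟩ := Option.bind_eq_some_iff.1 habc
    exact ⟨p, ⟨a, ha, b, hb, hab⟩, c, hc, hpc⟩

lemma mem_smul_smul' {A B C : SWiring} {x : SOp} :
    x ∈ smul A (smul B C) ↔
      ∃ a ∈ A, ∃ b ∈ B, ∃ c ∈ C, (scomp b c).bind (fun r => scomp a r) = some x := by
  simp only [mem_smul]
  constructor
  · rintro ⟨a, ha, r, ⟨b, hb, c, hc, hbc⟩, har⟩
    exact ⟨a, ha, b, hb, c, hc, by rwa [hbc, Option.bind_some]⟩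
  · rintro ⟨a, ha, b, hb, c, hc, habc⟩
    obtain ⟨r, hbc, har⟩ := Option.bind_eq_some_iff.1 habc
    exact ⟨a, ha, r, ⟨b, hb, c, hc, hbc⟩, har⟩

protected lemma smul_assoc (A B C : SWiring) : smul (smul A B) C = smul A (smul B C) := by
  ext x
  simp only [mem_smul_smul, mem_smul_smul', scomp_assoc]

protected lemma one_smul (A : SWiring) : smul {([], [])} A = A := by
  ext x
  simp only [mem_smul, Finset.mem_singleton, exists_eq_left, one_scomp, Option.some.injEq,
    exists_eq_right]

protected lemma smul_one (A : SWiring) : smul A {([], [])} = A := by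
  ext x
  simp only [mem_smul, Finset.mem_singleton, exists_eq_left, scomp_one, Option.some.injEq,
    exists_eq_right]

lemma spow_succ' (F : SWiring) (n : ℕ) : spow F (n + 1) = smul F (spow F n) := by
  induction n with
  | zero => exact (SWiring.one_smul F).trans (SWiring.smul_one F).symm
  | succ n ih =>
    calc spow F (n + 2) = smul (smul F (spow F n)) F := congrArg (smul · F) ih
      _ = smul F (spow F (n + 1)) := SWiring.smul_assoc F (spow F n) F

end SWiring

def encT (t : CT) : List ℕ := t.1.map rl ++ [cSym t.2]

lemma rl_injective : Function.Injective rl := fun x y h => by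
  simp only [rl] at h
  omega

lemma cSym_not_mem_map_rl (c : ℕ) (L : List ℕ) : cSym c ∉ L.map rl := by
  simp only [List.mem_map, not_exists, not_and]
  intro s _ h
  simp only [rl, cSym] at h
  omega

lemma encT_injective : Function.Injective encT := by
  rintro ⟨τ, c⟩ ⟨σ, d⟩ h
  obtain ⟨hτσ, hcd⟩ := List.append_inj' h rfl
  obtain rfl := (List.map_injective_iff.2 rl_injective) hτσ
  simp only [List.cons.injEq, cSym, and_true] at hcd
  simp only [Prod.mk.injEq, true_and]
  omega

lemma encT_append (L : List ℕ) (t : CT) : encT (L ++ t.1, t.2) = L.map rl ++ encT t := by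
  simp [encT]

lemma map_rl_prefix_encT_iff {L : List ℕ} {t : CT} : L.map rl <+: encT t ↔ L <+: t.1 := by
  rw [encT, List.prefix_concat_iff, List.prefix_map_iff_of_injective rl_injective,
    or_iff_right]
  intro h
  exact cSym_not_mem_map_rl t.2 L (h ▸ by simp)

lemma scomp_map_rl_encT_eq_some_iff {f : SOp} {t : CT} {q : SOp} :
    scomp (f.1.map rl, f.2.map rl) (encT t, [START]) = some q ↔
      ∃ μ, t.1 = f.2 ++ μ ∧ q = (encT (f.1 ++ μ, t.2), [START]) := by
  obtain ⟨τ, c⟩ := t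
  rw [scomp_eq_some_iff]
  constructor
  · rintro (⟨u, hu, rfl⟩ | ⟨u, hu, -⟩)
    · obtain ⟨μ, rfl⟩ := map_rl_prefix_encT_iff.1 ⟨u, hu.symm⟩
      rw [encT_append f.2 (μ, c)] at hu
      exact ⟨μ, rfl, by rw [List.append_cancel_left hu.symm, ← encT_append f.1 (μ, c)]⟩
    · refine absurd ?_ (cSym_not_mem_map_rl c f.2)
      rw [show f.2.map rl = encT (τ, c) ++ u from hu]
      simp [encT]
  · rintro ⟨μ, rfl, rfl⟩
    exact .inl ⟨encT (μ, c), encT_append f.2 (μ, c), by rw [← encT_append f.1 (μ, c)]⟩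

lemma exists_derive_of_mem_smul_spow {D : Finset CT} {P : SWiring} {n : ℕ} {q : SOp}
    (hq : q ∈ smul (spow (encP P) n) (encD D)) : ∃ t, q = (encT t, [START]) ∧ Derive D P t := by
  induction n generalizing q with
  | zero =>
    rw [spow, SWiring.one_smul] at hq
    obtain ⟨t, ht, rfl⟩ := Finset.mem_image.1 hq
    exact ⟨t, rfl, .fact ht⟩
  | succ n ih =>
    rw [SWiring.spow_succ', SWiring.smul_assoc, SWiring.mem_smul] at hq
    obtain ⟨_, hf', q', hq', hfq⟩ := hq
    obtain ⟨f, hf, rfl⟩ := Finset.mem_image.1 hf'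
    obtain ⟨⟨τ, c⟩, rfl, ht⟩ := ih hq'
    obtain ⟨μ, rfl, rfl⟩ := scomp_map_rl_encT_eq_some_iff.1 hfq
    exact ⟨_, rfl, .step hf ht⟩

lemma Derive.exists_mem_smul_spow {D : Finset CT} {P : SWiring} {t : CT} (h : Derive D P t) :
    ∃ n, (encT t, [START]) ∈ smul (spow (encP P) n) (encD D) := by
  induction h with
  | fact hd => exact ⟨0, by rw [spow, SWiring.one_smul]; exact Finset.mem_image_of_mem _ hd⟩
  | step hf _ ih =>
    obtain ⟨n, hn⟩ := ih
    refine ⟨n + 1, ?_⟩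
    rw [SWiring.spow_succ', SWiring.smul_assoc, SWiring.mem_smul]
    exact ⟨_, Finset.mem_image_of_mem _ hf, _, hn, scomp_map_rl_encT_eq_some_iff.2 ⟨_, rfl, rfl⟩⟩

/-- success: a unary query `(D, P, G)` succeeds iff the flow
`ACCEPT(x) ⊣ START(x)` belongs to `⟦G⟧ Pⁿ ⟦D⟧` for some `n`. -/
theorem query_success (D : Finset CT) (P : SWiring) (G : CT) :
    Succeeds D P G ↔
      ∃ n, ([ACCEPT], [START]) ∈ smul (smul {encG G} (spow (encP P) n)) (encD D) := by
  simp only [SWiring.smul_assoc]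
  constructor
  · intro h
    obtain ⟨n, hn⟩ := Derive.exists_mem_smul_spow h
    exact ⟨n, SWiring.mem_smul.2
      ⟨_, Finset.mem_singleton_self _, _, hn, scomp_mk_eq_some_mk_iff.2 rfl⟩⟩
  · rintro ⟨n, hn⟩
    obtain ⟨_, hG, q, hq, hGq⟩ := SWiring.mem_smul.1 hn
    obtain rfl := Finset.mem_singleton.1 hG
    obtain ⟨t, rfl, ht⟩ := exists_derive_of_mem_smul_spow hq
    obtain rfl := encT_injective (scomp_mk_eq_some_mk_iff.1 hGq)
    exact ht
end
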